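/- Let A⊗̄_R B be an alternative twisted tensor product of algebras such that R is bijective with inverse P : A⊗B → B⊗A. Assume that (id_A⊗τ_{B,B})∘(R⊗id_B)∘(id_B⊗R) = (R⊗id_B)∘(id_B⊗R)∘(τ_{B,B}⊗id_A) as maps B⊗B⊗A → A⊗B⊗B, and that R(B⊗A₀) = A₀⊗B. Then P satisfies the mirror conditions (aatm1)–(aatm3) with C = B and D = A, and R : B⊗̲_P A → A⊗̄_R B is an isomorphism of unital algebras. -/

import Mathlib

/-!
Since `R` is bijective, each mirror condition for `P` may be checked after applying `R`,
where it follows from the twisting axioms of `R`. The axiom for products in `B` only holds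
on `B ⊗ A₀`, which is where the hypothesis `R(B ⊗ A₀) = A₀ ⊗ B` enters: `P` maps `A₀ ⊗ B`
into `B ⊗ A₀`. Multiplying out the two `B`-legs of the braid relation gives
`a_{Rr} ⊗ b_R b₀_r = a_{Rr} ⊗ b_r b₀_R`, which turns the product `b₀ b` of the mirror side into
left multiplication by `1 ⊗ b` in `A ⊗̄_R B`. Multiplicativity of `R` is then checked on
`b ⊗ a` and `b' ⊗ a'` with `a, a'` each equal to `1` or in `A₀`, which suffices because
`A = K·1 ⊕ A₀`.
-/

open TensorProduct LinearMap

section TwistPreamble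

variable (K : Type*) [Field K]
variable (A : Type*) [NonAssocRing A] [Module K A] [SMulCommClass K A A] [IsScalarTower K A A]
variable (B : Type*) [NonAssocRing B] [Module K B] [SMulCommClass K B B] [IsScalarTower K B B]

/-- Sweedler helper: sends `Σ aR ⊗ bR` in `A ⊗ B` to `Σ (aR * a'_r) ⊗ (bR)_r`,
where `R((bR) ⊗ a') = a'_r ⊗ (bR)_r`. -/
noncomputable def attpRmul (R : B ⊗[K] A →ₗ[K] A ⊗[K] B) (a' : A) :
    A ⊗[K] B →ₗ[K] A ⊗[K] B :=
  (rTensor B (LinearMap.mul' K A)) ∘ₗ (TensorProduct.assoc K A A B).symm.toLinearMap ∘ₗ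
    (lTensor A (R ∘ₗ (TensorProduct.mk K B A).flip a'))

/-- Sweedler helper: sends `Σ aR ⊗ b'R` in `A ⊗ B` to `Σ (aR)_r ⊗ (b'R * b_r)`,
where `R(b ⊗ aR) = (aR)_r ⊗ b_r`. -/
noncomputable def attpLmul (R : B ⊗[K] A →ₗ[K] A ⊗[K] B) (b : B) :
    A ⊗[K] B →ₗ[K] A ⊗[K] B :=
  (lTensor A ((LinearMap.mul' K B) ∘ₗ (TensorProduct.comm K B B).toLinearMap)) ∘ₗ
    (TensorProduct.assoc K A B B).toLinearMap ∘ₗ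
    (rTensor B (R ∘ₗ (TensorProduct.mk K B A) b))

/-- `R : B ⊗ A → A ⊗ B` is an alternative twisting map w.r.t. the decomposition
`A = K·1_A ⊕ A₀`. -/
def IsAltTwistingMap (A₀ : Submodule K A) (R : B ⊗[K] A →ₗ[K] A ⊗[K] B) : Prop :=
  (∀ a : A, R ((1 : B) ⊗ₜ[K] a) = a ⊗ₜ[K] (1 : B)) ∧
  (∀ b : B, R (b ⊗ₜ[K] (1 : A)) = (1 : A) ⊗ₜ[K] b) ∧
  (∀ (a a' : A) (b : B), R (b ⊗ₜ[K] (a * a')) = attpRmul K A B R a' (R (b ⊗ₜ[K] a))) ∧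
  (∀ a ∈ A₀, ∀ b b' : B, R ((b * b') ⊗ₜ[K] a) = attpLmul K A B R b (R (b' ⊗ₜ[K] a)))

/-- `m` is the multiplication of the alternative twisted tensor product `A ⊗̄_R B`:
`(1⊗b)(a'⊗b') = a'_R ⊗ b_R b'` and, for `a ∈ A₀`, `(a⊗b)(a'⊗b') = a a'_R ⊗ b' b_R`. -/
def IsAltMul (A₀ : Submodule K A) (R : B ⊗[K] A →ₗ[K] A ⊗[K] B)
    (m : A ⊗[K] B →ₗ[K] A ⊗[K] B →ₗ[K] A ⊗[K] B) : Prop :=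
  (∀ (b : B) (a' : A) (b' : B),
      m ((1 : A) ⊗ₜ[K] b) (a' ⊗ₜ[K] b') = (lTensor A (mulRight K b')) (R (b ⊗ₜ[K] a'))) ∧
  (∀ a ∈ A₀, ∀ (b : B) (a' : A) (b' : B),
      m (a ⊗ₜ[K] b) (a' ⊗ₜ[K] b') =
        (TensorProduct.map (mulLeft K a) (mulLeft K b')) (R (b ⊗ₜ[K] a')))

end TwistPreamble

section MirrorPreamble

variable (K : Type*) [Field K]
variable (C : Type*) [NonAssocRing C] [Module K C] [SMulCommClass K C C] [IsScalarTower K C C]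
variable (D : Type*) [NonAssocRing D] [Module K D] [SMulCommClass K D D] [IsScalarTower K D D]

/-- Sweedler helper: sends `Σ cP ⊗ dP` in `C ⊗ D` to `Σ (c'_p * cP) ⊗ (dP)_p`,
where `P((dP) ⊗ c') = c'_p ⊗ (dP)_p`. -/
noncomputable def mirrorPc (P : D ⊗[K] C →ₗ[K] C ⊗[K] D) (c' : C) :
    C ⊗[K] D →ₗ[K] C ⊗[K] D :=
  (LinearMap.rTensor D ((LinearMap.mul' K C) ∘ₗ (TensorProduct.comm K C C).toLinearMap)) ∘ₗ
    (TensorProduct.assoc K C C D).symm.toLinearMap ∘ₗ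
    (LinearMap.lTensor C (P ∘ₗ (TensorProduct.mk K D C).flip c'))

/-- Sweedler helper: sends `Σ cP ⊗ d'P` in `C ⊗ D` to `Σ (cP)_p ⊗ (d_p * d'P)`,
where `P(d ⊗ cP) = (cP)_p ⊗ d_p`. -/
noncomputable def mirrorPd (P : D ⊗[K] C →ₗ[K] C ⊗[K] D) (d : D) :
    C ⊗[K] D →ₗ[K] C ⊗[K] D :=
  (LinearMap.lTensor C (LinearMap.mul' K D)) ∘ₗ
    (TensorProduct.assoc K C D D).toLinearMap ∘ₗ
    (LinearMap.rTensor D (P ∘ₗ (TensorProduct.mk K D C) d))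

/-- `P : D ⊗ C → C ⊗ D` satisfies the mirror conditions (aatm1)–(aatm3) w.r.t. the
decomposition `D = K·1_D ⊕ D₀`. -/
def IsMirrorTwistingMap (D₀ : Submodule K D) (P : D ⊗[K] C →ₗ[K] C ⊗[K] D) : Prop :=
  (∀ c : C, P ((1 : D) ⊗ₜ[K] c) = c ⊗ₜ[K] (1 : D)) ∧
  (∀ d : D, P (d ⊗ₜ[K] (1 : C)) = (1 : C) ⊗ₜ[K] d) ∧
  (∀ d ∈ D₀, ∀ c c' : C, P (d ⊗ₜ[K] (c * c')) = mirrorPc K C D P c' (P (d ⊗ₜ[K] c))) ∧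
  (∀ (c : C) (d d' : D), P ((d * d') ⊗ₜ[K] c) = mirrorPd K C D P d (P (d' ⊗ₜ[K] c)))

/-- `m` is the multiplication of the mirror product `C ⊗̲_P D`:
`(c⊗d)(c'⊗1) = c c'_P ⊗ d_P` and, for `d' ∈ D₀`, `(c⊗d)(c'⊗d') = c'_P c ⊗ d_P d'`. -/
def IsMirrorMul (D₀ : Submodule K D) (P : D ⊗[K] C →ₗ[K] C ⊗[K] D)
    (m : C ⊗[K] D →ₗ[K] C ⊗[K] D →ₗ[K] C ⊗[K] D) : Prop :=
  (∀ (c : C) (d : D) (c' : C),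
      m (c ⊗ₜ[K] d) (c' ⊗ₜ[K] (1 : D)) =
        (LinearMap.rTensor D (LinearMap.mulLeft K c)) (P (d ⊗ₜ[K] c'))) ∧
  (∀ d' ∈ D₀, ∀ (c : C) (d : D) (c' : C),
      m (c ⊗ₜ[K] d) (c' ⊗ₜ[K] d') =
        (TensorProduct.map (LinearMap.mulRight K c) (LinearMap.mulRight K d'))
          (P (d ⊗ₜ[K] c')))

end MirrorPreamble

section BraidPreamble

variable (K : Type*) [Field K]
variable (A : Type*) [NonAssocRing A] [Module K A] [SMulCommClass K A A] [IsScalarTower K A A]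
variable (B : Type*) [NonAssocRing B] [Module K B] [SMulCommClass K B B] [IsScalarTower K B B]

/-- The left-hand side `(id_A ⊗ τ_{B,B}) ∘ (R ⊗ id_B) ∘ (id_B ⊗ R)` of the braid
relation, as a map `B ⊗ (B ⊗ A) → A ⊗ (B ⊗ B)`. -/
noncomputable def braidL (R : B ⊗[K] A →ₗ[K] A ⊗[K] B) :
    B ⊗[K] (B ⊗[K] A) →ₗ[K] A ⊗[K] (B ⊗[K] B) :=
  (lTensor A (TensorProduct.comm K B B).toLinearMap) ∘ₗ
    (TensorProduct.assoc K A B B).toLinearMap ∘ₗ (rTensor B R) ∘ₗ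
    (TensorProduct.assoc K B A B).symm.toLinearMap ∘ₗ (lTensor B R)

/-- The right-hand side `(R ⊗ id_B) ∘ (id_B ⊗ R) ∘ (τ_{B,B} ⊗ id_A)` of the braid
relation, as a map `B ⊗ (B ⊗ A) → A ⊗ (B ⊗ B)`. -/
noncomputable def braidR (R : B ⊗[K] A →ₗ[K] A ⊗[K] B) :
    B ⊗[K] (B ⊗[K] A) →ₗ[K] A ⊗[K] (B ⊗[K] B) :=
  (TensorProduct.assoc K A B B).toLinearMap ∘ₗ (rTensor B R) ∘ₗ
    (TensorProduct.assoc K B A B).symm.toLinearMap ∘ₗ (lTensor B R) ∘ₗ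
    (TensorProduct.assoc K B B A).toLinearMap ∘ₗ
    (rTensor A (TensorProduct.comm K B B).toLinearMap) ∘ₗ
    (TensorProduct.assoc K B B A).symm.toLinearMap

end BraidPreamble

section TensorProduct

variable {k M N X : Type*} [CommSemiring k] [AddCommMonoid M] [AddCommMonoid N]
  [AddCommMonoid X] [Module k M] [Module k N] [Module k X]

lemma TensorProduct.ext_of_span_singleton_sup_eq_top {e : N} {N₀ : Submodule k N}
    (hN : Submodule.span k {e} ⊔ N₀ = ⊤) {f g : M ⊗[k] N →ₗ[k] X}
    (he : ∀ x, f (x ⊗ₜ e) = g (x ⊗ₜ e)) (h₀ : ∀ n ∈ N₀, ∀ x, f (x ⊗ₜ n) = g (x ⊗ₜ n)) :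
    f = g := by
  refine TensorProduct.ext' fun x n => ?_
  obtain ⟨u, hu, v, hv, rfl⟩ := Submodule.mem_sup.mp (hN ▸ Submodule.mem_top : n ∈ _)
  obtain ⟨s, rfl⟩ := Submodule.mem_span_singleton.mp hu
  simp only [tmul_add, tmul_smul, map_add, map_smul, he, h₀ v hv]

lemma apply_tmul_mem_range_rTensor {N₀ : Submodule k N} {T : M ⊗[k] N →ₗ[k] N ⊗[k] M}
    (hT : (range (lTensor M N₀.subtype)).map T ≤ range (rTensor M N₀.subtype))
    {n : N} (hn : n ∈ N₀) (x : M) : T (x ⊗ₜ n) ∈ range (rTensor M N₀.subtype) :=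
  hT ⟨x ⊗ₜ n, ⟨x ⊗ₜ ⟨n, hn⟩, rfl⟩, rfl⟩

lemma inverse_apply_tmul_mem_range_lTensor {N₀ : Submodule k N}
    {T : M ⊗[k] N →ₗ[k] N ⊗[k] M} {S : N ⊗[k] M →ₗ[k] M ⊗[k] N} (hST : ∀ y, S (T y) = y)
    (hT : range (rTensor M N₀.subtype) ≤ (range (lTensor M N₀.subtype)).map T)
    {n : N} (hn : n ∈ N₀) (x : M) : S (n ⊗ₜ x) ∈ range (lTensor M N₀.subtype) := by
  obtain ⟨y, hy, hTy⟩ :=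
    hT (show n ⊗ₜ x ∈ range (rTensor M N₀.subtype) from ⟨⟨n, hn⟩ ⊗ₜ x, rfl⟩)
  rwa [← hTy, hST]

end TensorProduct

section Sweedler

variable {K : Type*} [Field K]
variable {A : Type*} [NonAssocRing A] [Module K A]
variable {B : Type*} [NonAssocRing B] [Module K B]

lemma attpRmul_tmul [SMulCommClass K A A] [IsScalarTower K A A]
    (R : B ⊗[K] A →ₗ[K] A ⊗[K] B) (a' x : A) (y : B) :
    attpRmul K A B R a' (x ⊗ₜ y) = rTensor B (mulLeft K x) (R (y ⊗ₜ a')) := by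
  simp only [attpRmul, coe_comp, Function.comp_apply, lTensor_tmul, mk_apply, flip_apply,
    LinearEquiv.coe_coe]
  induction R (y ⊗ₜ[K] a') using TensorProduct.induction_on with
  | zero => simp
  | tmul p q => simp
  | add u v hu hv => simp only [tmul_add, map_add, hu, hv]

lemma attpLmul_tmul [SMulCommClass K B B] [IsScalarTower K B B]
    (R : B ⊗[K] A →ₗ[K] A ⊗[K] B) (b : B) (x : A) (y : B) :
    attpLmul K A B R b (x ⊗ₜ y) = lTensor A (mulLeft K y) (R (b ⊗ₜ x)) := by
  simp only [attpLmul, coe_comp, Function.comp_apply, rTensor_tmul, mk_apply,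
    LinearEquiv.coe_coe]
  induction R (b ⊗ₜ[K] x) using TensorProduct.induction_on with
  | zero => simp
  | tmul p q => simp
  | add u v hu hv => simp only [add_tmul, map_add, hu, hv]

lemma mirrorPc_tmul [SMulCommClass K B B] [IsScalarTower K B B]
    (P : A ⊗[K] B →ₗ[K] B ⊗[K] A) (c' c : B) (d : A) :
    mirrorPc K B A P c' (c ⊗ₜ d) = rTensor A (mulRight K c) (P (d ⊗ₜ c')) := by
  simp only [mirrorPc, coe_comp, Function.comp_apply, lTensor_tmul, mk_apply, flip_apply,
    LinearEquiv.coe_coe]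
  induction P (d ⊗ₜ[K] c') using TensorProduct.induction_on with
  | zero => simp
  | tmul p q => simp
  | add u v hu hv => simp only [tmul_add, map_add, hu, hv]

lemma mirrorPd_tmul [SMulCommClass K A A] [IsScalarTower K A A]
    (P : A ⊗[K] B →ₗ[K] B ⊗[K] A) (d : A) (c : B) (d' : A) :
    mirrorPd K B A P d (c ⊗ₜ d') = lTensor B (mulRight K d') (P (d ⊗ₜ c)) := by
  simp only [mirrorPd, coe_comp, Function.comp_apply, rTensor_tmul, mk_apply,
    LinearEquiv.coe_coe]
  induction P (d ⊗ₜ[K] c) using TensorProduct.induction_on with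
  | zero => simp
  | tmul p q => simp
  | add u v hu hv => simp only [add_tmul, map_add, hu, hv]

variable [SMulCommClass K B B] [IsScalarTower K B B]

/-- `x ⊗ y ↦ x_R ⊗ b_R y`, left multiplication by `1 ⊗ b` in `A ⊗̄_R B`. -/
noncomputable def leftMulOneTmul (R : B ⊗[K] A →ₗ[K] A ⊗[K] B) (b : B) :
    A ⊗[K] B →ₗ[K] A ⊗[K] B :=
  lTensor A (LinearMap.mul' K B) ∘ₗ (TensorProduct.assoc K A B B).toLinearMap ∘ₗ
    rTensor B (R ∘ₗ TensorProduct.mk K B A b)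

lemma leftMulOneTmul_tmul (R : B ⊗[K] A →ₗ[K] A ⊗[K] B) (b : B) (x : A) (y : B) :
    leftMulOneTmul R b (x ⊗ₜ y) = lTensor A (mulRight K y) (R (b ⊗ₜ x)) := by
  simp only [leftMulOneTmul, coe_comp, Function.comp_apply, rTensor_tmul, mk_apply,
    LinearEquiv.coe_coe]
  induction R (b ⊗ₜ[K] x) using TensorProduct.induction_on with
  | zero => simp
  | tmul p q => simp
  | add u v hu hv => simp only [add_tmul, map_add, hu, hv]

lemma lTensor_mul'_braidL_tmul (R : B ⊗[K] A →ₗ[K] A ⊗[K] B) (b₀ b : B) (a : A) :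
    lTensor A (LinearMap.mul' K B) (braidL K A B R (b₀ ⊗ₜ (b ⊗ₜ a))) =
      attpLmul K A B R b₀ (R (b ⊗ₜ a)) := by
  simp only [braidL, coe_comp, Function.comp_apply, lTensor_tmul, LinearEquiv.coe_coe]
  induction R (b ⊗ₜ[K] a) using TensorProduct.induction_on with
  | zero => simp
  | tmul x y =>
      rw [attpLmul_tmul, TensorProduct.assoc_symm_tmul, rTensor_tmul]
      induction R (b₀ ⊗ₜ[K] x) using TensorProduct.induction_on with
      | zero => simp
      | tmul p q => simp
      | add u v hu hv => simp only [add_tmul, map_add, hu, hv]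
  | add u v hu hv => simp only [tmul_add, map_add] at hu hv ⊢; rw [hu, hv]

lemma lTensor_mul'_braidR_tmul (R : B ⊗[K] A →ₗ[K] A ⊗[K] B) (b₀ b : B) (a : A) :
    lTensor A (LinearMap.mul' K B) (braidR K A B R (b₀ ⊗ₜ (b ⊗ₜ a))) =
      leftMulOneTmul R b (R (b₀ ⊗ₜ a)) := by
  simp only [braidR, coe_comp, Function.comp_apply, LinearEquiv.coe_coe,
    TensorProduct.assoc_symm_tmul, rTensor_tmul, TensorProduct.comm_tmul,
    TensorProduct.assoc_tmul, lTensor_tmul]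
  induction R (b₀ ⊗ₜ[K] a) using TensorProduct.induction_on with
  | zero => simp
  | tmul x y =>
      rw [leftMulOneTmul_tmul, TensorProduct.assoc_symm_tmul, rTensor_tmul]
      induction R (b ⊗ₜ[K] x) using TensorProduct.induction_on with
      | zero => simp
      | tmul p q => simp
      | add u v hu hv => simp only [add_tmul, map_add, hu, hv]
  | add u v hu hv => simp only [tmul_add, map_add] at hu hv ⊢; rw [hu, hv]

lemma attpLmul_eq_leftMulOneTmul (R : B ⊗[K] A →ₗ[K] A ⊗[K] B)
    (hbraid : braidL K A B R = braidR K A B R) (b₀ b : B) (a : A) :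
    attpLmul K A B R b₀ (R (b ⊗ₜ a)) = leftMulOneTmul R b (R (b₀ ⊗ₜ a)) := by
  rw [← lTensor_mul'_braidL_tmul, ← lTensor_mul'_braidR_tmul, hbraid]

end Sweedler

section Twisting

variable {K : Type*} [Field K]
variable {A : Type*} [NonAssocRing A] [Module K A] [SMulCommClass K A A] [IsScalarTower K A A]
variable {B : Type*} [NonAssocRing B] [Module K B] [SMulCommClass K B B] [IsScalarTower K B B]
variable {A₀ : Submodule K A} {R : B ⊗[K] A →ₗ[K] A ⊗[K] B} {P : A ⊗[K] B →ₗ[K] B ⊗[K] A}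

namespace IsAltTwistingMap

lemma map_lTensor_mulRight (hR : IsAltTwistingMap K A B A₀ R) (a' : A) (x : B ⊗[K] A) :
    R (lTensor B (mulRight K a') x) = attpRmul K A B R a' (R x) := by
  induction x using TensorProduct.induction_on with
  | zero => simp
  | tmul b a => simpa using hR.2.2.1 a a' b
  | add u v hu hv => simp only [map_add, hu, hv]

lemma map_rTensor_mulLeft (hR : IsAltTwistingMap K A B A₀ R) (b : B) {z : B ⊗[K] A}
    (hz : z ∈ range (lTensor B A₀.subtype)) :
    R (rTensor A (mulLeft K b) z) = attpLmul K A B R b (R z) := by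
  obtain ⟨w, rfl⟩ := hz
  induction w using TensorProduct.induction_on with
  | zero => simp
  | tmul b' a => simpa using hR.2.2.2 a a.2 b b'
  | add u v hu hv => simp only [map_add, hu, hv]

lemma map_rTensor_mulRight (hR : IsAltTwistingMap K A B A₀ R)
    (hbraid : braidL K A B R = braidR K A B R) (b : B) {z : B ⊗[K] A}
    (hz : z ∈ range (lTensor B A₀.subtype)) :
    R (rTensor A (mulRight K b) z) = leftMulOneTmul R b (R z) := by
  obtain ⟨w, rfl⟩ := hz
  induction w using TensorProduct.induction_on with
  | zero => simp
  | tmul b₀ a =>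
      simp only [lTensor_tmul, Submodule.subtype_apply, rTensor_tmul, mulRight_apply]
      rw [hR.2.2.2 a a.2 b₀ b, attpLmul_eq_leftMulOneTmul R hbraid]
  | add u v hu hv => simp only [map_add, hu, hv]

lemma map_mirrorPd (hR : IsAltTwistingMap K A B A₀ R) (hRP : ∀ y, R (P y) = y) (d : A)
    (z : B ⊗[K] A) : R (mirrorPd K B A P d z) = rTensor B (mulLeft K d) (R z) := by
  induction z using TensorProduct.induction_on with
  | zero => simp
  | tmul c d' => rw [mirrorPd_tmul, hR.map_lTensor_mulRight, hRP, attpRmul_tmul]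
  | add u v hu hv => simp only [map_add, hu, hv]

lemma map_mirrorPc (hR : IsAltTwistingMap K A B A₀ R)
    (hbraid : braidL K A B R = braidR K A B R) (hRP : ∀ y, R (P y) = y)
    (hP₀ : ∀ a ∈ A₀, ∀ b : B, P (a ⊗ₜ b) ∈ range (lTensor B A₀.subtype)) (c' : B)
    {z : B ⊗[K] A} (hz : z ∈ range (lTensor B A₀.subtype)) :
    R (mirrorPc K B A P c' z) = lTensor A (mulRight K c') (R z) := by
  obtain ⟨w, rfl⟩ := hz
  induction w using TensorProduct.induction_on with
  | zero => simp
  | tmul c a =>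
      simp only [lTensor_tmul, Submodule.subtype_apply]
      rw [mirrorPc_tmul, hR.map_rTensor_mulRight hbraid c (hP₀ a a.2 c'), hRP,
        leftMulOneTmul_tmul]
  | add u v hu hv => simp only [map_add, hu, hv]

theorem isMirrorTwistingMap (hR : IsAltTwistingMap K A B A₀ R)
    (hbraid : braidL K A B R = braidR K A B R) (hPR : ∀ x, P (R x) = x)
    (hRP : ∀ y, R (P y) = y)
    (hP₀ : ∀ a ∈ A₀, ∀ b : B, P (a ⊗ₜ b) ∈ range (lTensor B A₀.subtype)) :
    IsMirrorTwistingMap K B A A₀ P := by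
  have injR : Function.Injective R := Function.LeftInverse.injective hPR
  refine ⟨fun c => ?_, fun d => ?_, fun d hd c c' => injR ?_, fun c d d' => injR ?_⟩
  · rw [← hR.2.1 c, hPR]
  · rw [← hR.1 d, hPR]
  · rw [hRP, hR.map_mirrorPc hbraid hRP hP₀ c' (hP₀ d hd c), hRP]
    simp
  · rw [hRP, hR.map_mirrorPd hRP, hRP]
    simp

end IsAltTwistingMap

end Twisting

section Multiplication

variable {K : Type*} [Field K]
variable {A : Type*} [NonAssocRing A] [Module K A] [SMulCommClass K A A]
variable {B : Type*} [NonAssocRing B] [Module K B] [SMulCommClass K B B] [IsScalarTower K B B]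
variable {A₀ : Submodule K A} {R : B ⊗[K] A →ₗ[K] A ⊗[K] B} {P : A ⊗[K] B →ₗ[K] B ⊗[K] A}
variable {m : A ⊗[K] B →ₗ[K] A ⊗[K] B →ₗ[K] A ⊗[K] B}
variable {m' : B ⊗[K] A →ₗ[K] B ⊗[K] A →ₗ[K] B ⊗[K] A}

lemma IsAltMul.one_tmul_apply (hm : IsAltMul K A B A₀ R m) (b : B) (w : A ⊗[K] B) :
    m (1 ⊗ₜ b) w = leftMulOneTmul R b w := by
  induction w using TensorProduct.induction_on with
  | zero => simp
  | tmul a' b' => rw [hm.1, leftMulOneTmul_tmul]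
  | add u v hu hv => simp only [map_add, hu, hv]

lemma IsAltMul.tmul_apply (hm : IsAltMul K A B A₀ R m) {a : A} (ha : a ∈ A₀) (b : B)
    (w : A ⊗[K] B) : m (a ⊗ₜ b) w = rTensor B (mulLeft K a) (attpLmul K A B R b w) := by
  induction w using TensorProduct.induction_on with
  | zero => simp
  | tmul a' b' =>
      rw [hm.2 a ha, attpLmul_tmul, ← rTensor_comp_lTensor, coe_comp, Function.comp_apply]
  | add u v hu hv => simp only [map_add, hu, hv]

variable [IsScalarTower K A A]

lemma IsAltMul.apply_one_tmul (hm : IsAltMul K A B A₀ R m) (hR : IsAltTwistingMap K A B A₀ R)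
    {z : A ⊗[K] B} (hz : z ∈ range (rTensor B A₀.subtype)) (b' : B) :
    m z (1 ⊗ₜ b') = lTensor A (mulLeft K b') z := by
  obtain ⟨w, rfl⟩ := hz
  induction w using TensorProduct.induction_on with
  | zero => simp
  | tmul a b =>
      simp only [rTensor_tmul, Submodule.subtype_apply]
      rw [hm.2 a a.2, hR.2.1]
      simp
  | add u v hu hv => simp only [map_add, LinearMap.add_apply, hu, hv]

lemma IsAltMul.attpRmul_lTensor_mulRight (hm : IsAltMul K A B A₀ R m)
    (hR : IsAltTwistingMap K A B A₀ R) {a' : A} (ha' : a' ∈ A₀) (b' : B) {z : A ⊗[K] B}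
    (hz : z ∈ range (rTensor B A₀.subtype)) :
    attpRmul K A B R a' (lTensor A (mulRight K b') z) = m z (R (b' ⊗ₜ a')) := by
  obtain ⟨w, rfl⟩ := hz
  induction w using TensorProduct.induction_on with
  | zero => simp
  | tmul a b =>
      simp only [rTensor_tmul, Submodule.subtype_apply, lTensor_tmul, mulRight_apply]
      rw [attpRmul_tmul, hR.2.2.2 a' ha', hm.tmul_apply a.2]
  | add u v hu hv => simp only [map_add, LinearMap.add_apply, hu, hv]

lemma map_mirrorMul_one_one (hR : IsAltTwistingMap K A B A₀ R) (hm : IsAltMul K A B A₀ R m)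
    (hP : IsMirrorTwistingMap K B A A₀ P) (hm' : IsMirrorMul K B A A₀ P m') (b b' : B) :
    R (m' (b ⊗ₜ 1) (b' ⊗ₜ 1)) = m (R (b ⊗ₜ 1)) (R (b' ⊗ₜ 1)) := by
  rw [hm'.1, hP.1, hR.2.1, hR.2.1, hm.one_tmul_apply, leftMulOneTmul_tmul, hR.2.1]
  simp [hR.2.1]

lemma map_mirrorMul_mem_one (hR : IsAltTwistingMap K A B A₀ R) (hm : IsAltMul K A B A₀ R m)
    (hm' : IsMirrorMul K B A A₀ P m') (hRP : ∀ y, R (P y) = y)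
    (hP₀ : ∀ a ∈ A₀, ∀ b : B, P (a ⊗ₜ b) ∈ range (lTensor B A₀.subtype))
    (hR₀ : ∀ a ∈ A₀, ∀ b : B, R (b ⊗ₜ a) ∈ range (rTensor B A₀.subtype))
    {a : A} (ha : a ∈ A₀) (b b' : B) :
    R (m' (b ⊗ₜ a) (b' ⊗ₜ 1)) = m (R (b ⊗ₜ a)) (R (b' ⊗ₜ 1)) := by
  rw [hm'.1, hR.map_rTensor_mulLeft b (hP₀ a ha b'), hRP, attpLmul_tmul, hR.2.1,
    hm.apply_one_tmul hR (hR₀ a ha b)]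

lemma map_mirrorMul_one_mem (hR : IsAltTwistingMap K A B A₀ R) (hm : IsAltMul K A B A₀ R m)
    (hP : IsMirrorTwistingMap K B A A₀ P) (hm' : IsMirrorMul K B A A₀ P m')
    (hbraid : braidL K A B R = braidR K A B R) {a' : A} (ha' : a' ∈ A₀) (b b' : B) :
    R (m' (b ⊗ₜ 1) (b' ⊗ₜ a')) = m (R (b ⊗ₜ 1)) (R (b' ⊗ₜ a')) := by
  rw [hm'.2 a' ha', hP.1, map_tmul, mulRight_apply, mulRight_apply, one_mul,
    hR.2.2.2 a' ha', attpLmul_eq_leftMulOneTmul R hbraid, hR.2.1, hm.one_tmul_apply]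

lemma map_mirrorMul_mem_mem (hR : IsAltTwistingMap K A B A₀ R) (hm : IsAltMul K A B A₀ R m)
    (hm' : IsMirrorMul K B A A₀ P m') (hbraid : braidL K A B R = braidR K A B R)
    (hRP : ∀ y, R (P y) = y)
    (hP₀ : ∀ a ∈ A₀, ∀ b : B, P (a ⊗ₜ b) ∈ range (lTensor B A₀.subtype))
    (hR₀ : ∀ a ∈ A₀, ∀ b : B, R (b ⊗ₜ a) ∈ range (rTensor B A₀.subtype))
    {a a' : A} (ha : a ∈ A₀) (ha' : a' ∈ A₀) (b b' : B) :
    R (m' (b ⊗ₜ a) (b' ⊗ₜ a')) = m (R (b ⊗ₜ a)) (R (b' ⊗ₜ a')) := by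
  rw [hm'.2 a' ha', ← lTensor_comp_rTensor, coe_comp, Function.comp_apply,
    hR.map_lTensor_mulRight, hR.map_rTensor_mulRight hbraid b (hP₀ a ha b'), hRP,
    leftMulOneTmul_tmul, hm.attpRmul_lTensor_mulRight hR ha' b' (hR₀ a ha b)]

end Multiplication

/-- if the alternative twisting map `R` is bijective with inverse `P`,
satisfies the braid relation and `R(B ⊗ A₀) = A₀ ⊗ B`, then `P` satisfies the mirror
conditions (aatm1)–(aatm3) (with `C = B`, `D = A`) and `R` is an isomorphism of unital
algebras `B ⊗̲_P A ≅ A ⊗̄_R B`. -/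
theorem stmt6 (K A B : Type*) [Field K]
    [NonAssocRing A] [Module K A] [SMulCommClass K A A] [IsScalarTower K A A]
    [NonAssocRing B] [Module K B] [SMulCommClass K B B] [IsScalarTower K B B]
    (A₀ : Submodule K A) (hdec : IsCompl (Submodule.span K {(1 : A)}) A₀)
    (R : B ⊗[K] A →ₗ[K] A ⊗[K] B) (hR : IsAltTwistingMap K A B A₀ R)
    (m : A ⊗[K] B →ₗ[K] A ⊗[K] B →ₗ[K] A ⊗[K] B) (hm : IsAltMul K A B A₀ R m)
    (P : A ⊗[K] B →ₗ[K] B ⊗[K] A)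
    (hPR : ∀ x : B ⊗[K] A, P (R x) = x) (hRP : ∀ y : A ⊗[K] B, R (P y) = y)
    (hbraid : braidL K A B R = braidR K A B R)
    (hR0 : Submodule.map R (LinearMap.range (lTensor B A₀.subtype)) =
      LinearMap.range (rTensor B A₀.subtype))
    (m' : B ⊗[K] A →ₗ[K] B ⊗[K] A →ₗ[K] B ⊗[K] A)
    (hm' : IsMirrorMul K B A A₀ P m') :
    IsMirrorTwistingMap K B A A₀ P ∧
    Function.Bijective R ∧
    R ((1 : B) ⊗ₜ[K] (1 : A)) = (1 : A) ⊗ₜ[K] (1 : B) ∧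
    (∀ x y : B ⊗[K] A, R (m' x y) = m (R x) (R y)) := by
  have hP₀ : ∀ a ∈ A₀, ∀ b : B, P (a ⊗ₜ b) ∈ range (lTensor B A₀.subtype) :=
    fun _ ha b => inverse_apply_tmul_mem_range_lTensor hPR hR0.ge ha b
  have hR₀ : ∀ a ∈ A₀, ∀ b : B, R (b ⊗ₜ a) ∈ range (rTensor B A₀.subtype) :=
    fun _ ha b => apply_tmul_mem_range_rTensor hR0.le ha b
  have hP := hR.isMirrorTwistingMap hbraid hPR hRP hP₀
  have hA := hdec.sup_eq_top
  have hmul : m'.compr₂ R = m.compl₁₂ R R :=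
    TensorProduct.ext_of_span_singleton_sup_eq_top hA
      (fun b => TensorProduct.ext_of_span_singleton_sup_eq_top hA
        (map_mirrorMul_one_one hR hm hP hm' b)
        (fun a' ha' b' => map_mirrorMul_one_mem hR hm hP hm' hbraid ha' b b'))
      (fun a ha b => TensorProduct.ext_of_span_singleton_sup_eq_top hA
        (map_mirrorMul_mem_one hR hm hm' hRP hP₀ hR₀ ha b)
        (fun a' ha' b' => map_mirrorMul_mem_mem hR hm hm' hbraid hRP hP₀ hR₀ ha ha' b b'))
  exact ⟨hP, Function.bijective_iff_has_inverse.mpr ⟨P, hPR, hRP⟩, hR.1 1,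
    fun x y => congr($hmul x y)⟩
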